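/- arXiv:1709.07475 — 5 statements merged into one kernel-verified Lean document; each statement's English description precedes it below -/
import Mathlib

section
/- For every positive integer N, at least one of the integers N, 2N, 3N, 4N is composite and satisfies both of the following conditions: (i) 4 divides it or it is divisible by some prime p ≡ 3 (mod 4), and (ii) 9 divides it or it is divisible by some prime p ≡ 2 (mod 3). -/
/-- For every positive integer `N`, at least one of `N, 2N, 3N, 4N` is composite
and satisfies: (i) `4` divides it or some prime `p ≡ 3 (mod 4)` divides it, and
(ii) `9` divides it or some prime `p ≡ 2 (mod 3)` divides it. -/
theorem exists_good_multiple (N : ℕ) (hN : 0 < N) :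
    ∃ M ∈ ({N, 2 * N, 3 * N, 4 * N} : Set ℕ),
      (1 < M ∧ ¬ M.Prime) ∧
      (4 ∣ M ∨ ∃ p : ℕ, p.Prime ∧ p ∣ M ∧ p % 4 = 3) ∧
      (9 ∣ M ∨ ∃ p : ℕ, p.Prime ∧ p ∣ M ∧ p % 3 = 2) := by
  refine ⟨4 * N, by simp, ⟨by omega, ?_⟩, Or.inl ⟨N, rfl⟩,
    Or.inr ⟨2, Nat.prime_two, ⟨2 * N, by ring⟩, rfl⟩⟩
  intro h
  have := h.eq_one_or_self_of_dvd 2 ⟨2 * N, by ring⟩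
  omega
end

section
/- Let K be a field, let g_1, …, g_t ∈ K[[X]] be nonzero formal power series with strictly increasing orders n_1 < n_2 < … < n_t (where n_i = ord(g_i)), and let f ∈ K[[X]]. Define recursively f_0 = f and, for 1 ≤ i ≤ t, f_i = f_{i−1} − (c_i / b_i)·g_i, where c_i is the coefficient of X^{n_i} in f_{i−1} and b_i is the (nonzero) coefficient of X^{n_i} in g_i. Then f lies in the K-span of g_1, …, g_t if and only if f_t = 0. -/
/-!
Each step subtracts a multiple of some `g_i`, so `f - f_t` lies in the span of the `g_i`, and
it kills the coefficient of `X^{n_i}` without disturbing the coefficients at `X^{n_j}` for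
`j < i`, because `ord g_i = n_i > n_j`. Hence `f_t` has vanishing coefficients at all the `n_i`.
The `g_i` are upper triangular with respect to these coefficients, so the only element of
their span with this property is `0`.
-/

open PowerSeries

namespace PowerSeries

section Triangular

variable {R ι : Type*} [Semiring R] {g : ι → R⟦X⟧} {n : ι → ℕ}

theorem coeff_order_eq_zero_of_lt [Preorder ι] (hord : ∀ i, (g i).order = n i)
    (hmono : StrictMono n) {i j : ι} (hij : i < j) : coeff (n i) (g j) = 0 :=
  coeff_of_lt_order _ (by rw [hord j]; exact_mod_cast hmono hij)

theorem coeff_order_sum_smul [Fintype ι] [LinearOrder ι] (hord : ∀ i, (g i).order = n i)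
    (hmono : StrictMono n) (c : ι → R) (i : ι) (hc : ∀ j < i, c j = 0) :
    coeff (n i) (∑ j, c j • g j) = c i * coeff (n i) (g i) := by
  rw [map_sum, Finset.sum_eq_single i]
  · simp
  · intro j _ hji
    rcases hji.lt_or_gt with hlt | hgt
    · simp [hc j hlt]
    · simp [coeff_order_eq_zero_of_lt hord hmono hgt]
  · simp

end Triangular

theorem eq_zero_of_mem_span_of_coeff_order_eq_zero {K ι : Type*} [Field K] [Fintype ι]
    [LinearOrder ι] {g : ι → K⟦X⟧} {n : ι → ℕ} (hord : ∀ i, (g i).order = n i)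
    (hmono : StrictMono n) {h : K⟦X⟧} (hspan : h ∈ Submodule.span K (Set.range g))
    (hcoeff : ∀ i, coeff (n i) h = 0) : h = 0 := by
  obtain ⟨c, rfl⟩ := (Submodule.mem_span_range_iff_exists_fun K).mp hspan
  have hc : ∀ i, c i = 0 := by
    intro i
    induction i using WellFoundedLT.induction with
    | _ i ih =>
      have hi := hcoeff i
      rw [coeff_order_sum_smul hord hmono c i ih] at hi
      exact (mul_eq_zero.mp hi).resolve_right (order_eq_nat.mp (hord i)).1
  simp [hc]

end PowerSeries

section Reduction

variable {K : Type*} [Field K] {t : ℕ} {g : Fin t → K⟦X⟧} {n : Fin t → ℕ}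
  {F : Fin (t + 1) → K⟦X⟧}
  (hFrec : ∀ i : Fin t, F i.succ =
    F i.castSucc - ((coeff (n i) (F i.castSucc)) / (coeff (n i) (g i))) • g i)
include hFrec

theorem reduction_sub_mem_span (j : Fin (t + 1)) :
    F j - F 0 ∈ Submodule.span K (Set.range g) := by
  induction j using Fin.induction with
  | zero => simp
  | succ i ih =>
    rw [hFrec i, sub_right_comm]
    exact sub_mem ih (Submodule.smul_mem _ _ (Submodule.subset_span ⟨i, rfl⟩))

theorem coeff_order_reduction_eq_zero (hord : ∀ i, (g i).order = n i) (hmono : StrictMono n)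
    {i : Fin t} {j : Fin (t + 1)} (hij : i.castSucc < j) : coeff (n i) (F j) = 0 := by
  induction j using Fin.induction with
  | zero => exact absurd hij (Fin.not_lt_zero _)
  | succ k ih =>
    rw [hFrec k, map_sub, map_smul, smul_eq_mul]
    rcases (Fin.castSucc_lt_succ_iff.mp hij).lt_or_eq with hik | rfl
    · rw [ih (Fin.castSucc_lt_castSucc_iff.mpr hik),
        coeff_order_eq_zero_of_lt hord hmono hik, mul_zero, sub_zero]
    · rw [div_mul_cancel₀ _ (order_eq_nat.mp (hord i)).1, sub_self]

end Reduction

theorem mem_span_iff_reduction_eq_zero_general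
    (K : Type*) [Field K] (t : ℕ)
    (g : Fin t → PowerSeries K) (n : Fin t → ℕ)
    (hord : ∀ i, (g i).order = n i)
    (hmono : StrictMono n)
    (f : PowerSeries K)
    (F : Fin (t + 1) → PowerSeries K)
    (hF0 : F 0 = f)
    (hFrec : ∀ i : Fin t, F i.succ =
      F i.castSucc -
        ((coeff (n i) (F i.castSucc)) / (coeff (n i) (g i))) • g i) :
    f ∈ Submodule.span K (Set.range g) ↔ F (Fin.last t) = 0 := by
  have hdiff := reduction_sub_mem_span hFrec (Fin.last t)
  rw [hF0] at hdiff
  constructor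
  · intro hf
    exact eq_zero_of_mem_span_of_coeff_order_eq_zero hord hmono
      (by simpa using add_mem hdiff hf)
      fun i => coeff_order_reduction_eq_zero hFrec hord hmono (Fin.castSucc_lt_last i)
  · intro hlast
    simpa [hlast] using neg_mem hdiff

/-- Correctness of the reduction step of the upper-triangular membership algorithm:
given nonzero power series `g_1, …, g_t` with strictly increasing orders
`n_1 < ⋯ < n_t` (where `n_i = ord (g_i)`) and `f`, define `f_0 = f` and
`f_i = f_{i-1} - (c_i / b_i) • g_i` where `c_i` is the coefficient of `X^{n_i}` in
`f_{i-1}` and `b_i` the coefficient of `X^{n_i}` in `g_i`.  Then `f` lies in the span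
of `g_1, …, g_t` if and only if `f_t = 0`. -/
theorem mem_span_iff_reduction_eq_zero
    (K : Type*) [Field K] (t : ℕ)
    (g : Fin t → PowerSeries K) (n : Fin t → ℕ)
    (hg : ∀ i, g i ≠ 0)
    (hord : ∀ i, (g i).order = n i)
    (hmono : StrictMono n)
    (f : PowerSeries K)
    (F : Fin (t + 1) → PowerSeries K)
    (hF0 : F 0 = f)
    (hFrec : ∀ i : Fin t, F i.succ =
      F i.castSucc -
        ((coeff (n i) (F i.castSucc)) / (coeff (n i) (g i))) • g i) :
    f ∈ Submodule.span K (Set.range g) ↔ F (Fin.last t) = 0 :=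
  mem_span_iff_reduction_eq_zero_general K t g n hord hmono f F hF0 hFrec
end

section
/- Let N be a positive integer. The group Γ0(N) has an elliptic point — that is, there exist a matrix γ = (a b; c d) ∈ Γ0(N) with γ ≠ I and γ ≠ −I and a point z in the upper half-plane ℍ with (az+b)/(cz+d) = z — if and only if it is NOT the case that both of the following hold: (i) 4 divides N or N is divisible by some prime p ≡ 3 (mod 4), and (ii) 9 divides N or N is divisible by some prime p ≡ 2 (mod 3). -/
/-!
An element `γ = (a b; c d) ≠ ±1` of `SL(2, ℤ)` fixes a point of `ℍ` exactly when its trace `t`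
satisfies `t ^ 2 < 4`, i.e. `t ∈ {-1, 0, 1}`. If `γ ∈ Γ0(N)` then `a ^ 2 - t * a + 1 = -b * c`
vanishes mod `N`, and conversely a root `a` of `x ^ 2 - t * x + 1` mod `N` is the corner entry of
`(a, -k; N, t - a) ∈ Γ0(N)`. So `Γ0(N)` has an elliptic point iff `x ^ 2 + 1` or `x ^ 2 + x + 1`
has a root mod `N`. By the Chinese remainder theorem and Hensel's lemma this is decided prime by
prime: a root mod `p` exists iff `p % 4 ≠ 3`, resp. `p % 3 ≠ 2`, and it lifts to every power of `p`
except at `p = 2`, resp. `p = 3`, where it is a double root and does not lift to `4`, resp. `9`.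
-/

open Polynomial UpperHalfPlane CongruenceSubgroup
open scoped MatrixGroups

theorem Polynomial.aeval_ringHom_apply {R S : Type*} [Ring R] [Ring S] (φ : R →+* S) (x : R)
    (f : ℤ[X]) : aeval (φ x) f = φ (aeval x f) :=
  aeval_algHom_apply φ.toIntAlgHom x f

def HasRootMod (f : ℤ[X]) (n : ℕ) : Prop := ∃ x : ZMod n, aeval x f = 0

namespace HasRootMod

variable {f : ℤ[X]}

theorem one : HasRootMod f 1 := ⟨0, Subsingleton.elim _ _⟩

theorem of_dvd {m n : ℕ} (h : HasRootMod f n) (hmn : m ∣ n) : HasRootMod f m := by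
  obtain ⟨x, hx⟩ := h
  exact ⟨ZMod.castHom hmn (ZMod m) x, by rw [aeval_ringHom_apply, hx, map_zero]⟩

theorem mul {m n : ℕ} (hmn : m.Coprime n) (hm : HasRootMod f m) (hn : HasRootMod f n) :
    HasRootMod f (m * n) := by
  obtain ⟨x, hx⟩ := hm
  obtain ⟨y, hy⟩ := hn
  let e := ZMod.chineseRemainder hmn
  refine ⟨e.symm (x, y), e.injective ?_⟩
  rw [map_zero, ← RingEquiv.coe_toRingHom, ← aeval_ringHom_apply, RingEquiv.coe_toRingHom,
    RingEquiv.apply_symm_apply]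
  ext
  · simpa [hx] using (aeval_ringHom_apply (RingHom.fst _ _) (x, y) f).symm
  · simpa [hy] using (aeval_ringHom_apply (RingHom.snd _ _) (x, y) f).symm

theorem of_forall_prime_pow {N : ℕ} (hN : N ≠ 0)
    (h : ∀ p k : ℕ, p.Prime → 0 < k → p ^ k ∣ N → HasRootMod f (p ^ k)) : HasRootMod f N := by
  induction N using Nat.recOnPosPrimePosCoprime with
  | zero => exact absurd rfl hN
  | one => exact one
  | prime_pow p k hp hk => exact h p k hp hk dvd_rfl
  | coprime a b _ _ hab iha ihb =>
    exact mul hab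
      (iha (left_ne_zero_of_mul hN) fun p k hp hk hpk => h p k hp hk (hpk.mul_right b))
      (ihb (right_ne_zero_of_mul hN) fun p k hp hk hpk => h p k hp hk (hpk.mul_left a))

theorem prime_pow {p : ℕ} [Fact p.Prime] {x : ZMod p} (hx : aeval x f = 0)
    (hx' : aeval x (derivative f) ≠ 0) (k : ℕ) : HasRootMod f (p ^ k) := by
  obtain ⟨a, rfl⟩ := ZMod.ringHom_surjective PadicInt.toZMod x
  have mem_maximalIdeal_iff (g : ℤ[X]) :
      aeval a g ∈ IsLocalRing.maximalIdeal ℤ_[p] ↔ aeval (PadicInt.toZMod a) g = 0 := by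
    rw [← PadicInt.ker_toZMod, RingHom.mem_ker, aeval_ringHom_apply]
  have hfa : ‖aeval a f‖ < 1 := by
    rw [← PadicInt.mem_nonunits, ← IsLocalRing.mem_maximalIdeal, mem_maximalIdeal_iff]
    exact hx
  have hf'a : ‖aeval a (derivative f)‖ = 1 := by
    rw [← PadicInt.isUnit_iff, ← not_not (a := IsUnit _), ← mem_nonunits_iff,
      ← IsLocalRing.mem_maximalIdeal, mem_maximalIdeal_iff]
    exact hx'
  obtain ⟨z, hz, -⟩ := hensels_lemma (F := f) (a := a) (by rwa [hf'a, one_pow])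
  exact ⟨PadicInt.toZModPow k z, by rw [aeval_ringHom_apply, hz, map_zero]⟩

theorem of_forall_prime_dvd {N : ℕ} (hN : N ≠ 0)
    (h : ∀ p : ℕ, p.Prime → p ∣ N →
      ∃ x : ZMod p, aeval x f = 0 ∧ (aeval x (derivative f) ≠ 0 ∨ ¬ p ^ 2 ∣ N)) :
    HasRootMod f N := by
  refine of_forall_prime_pow hN fun p k hp hk hpk => ?_
  have := Fact.mk hp
  obtain ⟨x, hx, hx' | hp2⟩ := h p hp ((dvd_pow_self p hk.ne').trans hpk)
  · exact prime_pow hx hx' k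
  · obtain rfl : k = 1 := by
      by_contra hk1
      exact hp2 ((pow_dvd_pow p (by omega)).trans hpk)
    rw [pow_one]
    exact ⟨x, hx⟩

end HasRootMod

theorem ZMod.exists_sq_add_add_one_eq_zero_iff {p : ℕ} [Fact p.Prime] :
    (∃ x : ZMod p, x ^ 2 + x + 1 = 0) ↔ p % 3 ≠ 2 := by
  rcases eq_or_ne p 3 with rfl | hp3
  · exact ⟨fun _ => by norm_num, fun _ => ⟨1, rfl⟩⟩
  have h3 : (3 : ZMod p) ≠ 0 := by
    exact_mod_cast CharP.cast_ne_zero_of_ne_of_prime (ZMod p) Nat.prime_three hp3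
  have hroot (x : ZMod p) : x ^ 2 + x + 1 = 0 ↔ orderOf x = 3 := by
    rw [orderOf_eq_prime_iff]
    constructor
    · intro hx
      refine ⟨by linear_combination (x - 1) * hx, ?_⟩
      rintro rfl
      exact h3 (by linear_combination hx)
    · rintro ⟨hx3, hx1⟩
      have : (x - 1) * (x ^ 2 + x + 1) = 0 := by linear_combination hx3
      exact (mul_eq_zero.1 this).resolve_left (sub_ne_zero.2 hx1)
  simp_rw [hroot]
  have hp := (Fact.out : p.Prime).two_le
  constructor
  · rintro ⟨x, hx⟩
    have hx0 : x ≠ 0 := by rintro rfl; simp at hx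
    have := hx ▸ ZMod.orderOf_dvd_card_sub_one hx0
    omega
  · intro h
    have hp3' : p % 3 ≠ 0 := fun h0 =>
      hp3 ((Nat.prime_dvd_prime_iff_eq Nat.prime_three Fact.out).1 (Nat.dvd_of_mod_eq_zero h0)).symm
    obtain ⟨u, hu⟩ := exists_prime_orderOf_dvd_card 3 (G := (ZMod p)ˣ)
      (by rw [ZMod.card_units]; omega)
    exact ⟨u, by rw [orderOf_units, hu]⟩

theorem exists_sq_add_one_eq_zero_iff (N : ℕ) :
    (∃ x : ZMod N, x ^ 2 + 1 = 0) ↔ ¬ (4 ∣ N ∨ ∃ p : ℕ, p.Prime ∧ p ∣ N ∧ p % 4 = 3) := by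
  have hf {n : ℕ} (x : ZMod n) : aeval x (X ^ 2 + 1 : ℤ[X]) = x ^ 2 + 1 := by simp
  have hf' {n : ℕ} (x : ZMod n) : aeval x (derivative (X ^ 2 + 1 : ℤ[X])) = 2 * x := by
    simp [map_ofNat]
  have hroot (n : ℕ) : HasRootMod (X ^ 2 + 1) n ↔ ∃ x : ZMod n, x ^ 2 + 1 = 0 := by
    simp only [HasRootMod, hf]
  rw [← hroot]
  constructor
  · rintro h (h4 | ⟨p, hp, hpN, hp4⟩)
    · obtain ⟨x, hx⟩ := (hroot 4).1 (h.of_dvd h4)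
      revert x hx
      decide
    · have := Fact.mk hp
      obtain ⟨x, hx⟩ := (hroot p).1 (h.of_dvd hpN)
      exact ZMod.exists_sq_eq_neg_one_iff.1 ⟨x, by linear_combination -hx⟩ hp4
  · rw [not_or, not_exists]
    rintro ⟨h4, hp⟩
    refine HasRootMod.of_forall_prime_dvd (by rintro rfl; exact h4 (dvd_zero 4)) fun p hp' hpN => ?_
    have := Fact.mk hp'
    rcases eq_or_ne p 2 with rfl | hp2
    · exact ⟨1, by rw [hf]; rfl, Or.inr h4⟩
    obtain ⟨r, hr⟩ := ZMod.exists_sq_eq_neg_one_iff.2 fun h => hp p ⟨hp', hpN, h⟩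
    have h2 : (2 : ZMod p) ≠ 0 := by
      exact_mod_cast CharP.cast_ne_zero_of_ne_of_prime (ZMod p) Nat.prime_two hp2
    have hr0 : r ≠ 0 := by
      rintro rfl
      simp at hr
    exact ⟨r, by rw [hf]; linear_combination -hr, Or.inl (by rw [hf']; exact mul_ne_zero h2 hr0)⟩

theorem exists_sq_add_add_one_eq_zero_iff (N : ℕ) :
    (∃ x : ZMod N, x ^ 2 + x + 1 = 0) ↔ ¬ (9 ∣ N ∨ ∃ p : ℕ, p.Prime ∧ p ∣ N ∧ p % 3 = 2) := by
  have hf {n : ℕ} (x : ZMod n) : aeval x (X ^ 2 + X + 1 : ℤ[X]) = x ^ 2 + x + 1 := by simp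
  have hf' {n : ℕ} (x : ZMod n) : aeval x (derivative (X ^ 2 + X + 1 : ℤ[X])) = 2 * x + 1 := by
    simp [map_ofNat]
  have hroot (n : ℕ) : HasRootMod (X ^ 2 + X + 1) n ↔ ∃ x : ZMod n, x ^ 2 + x + 1 = 0 := by
    simp only [HasRootMod, hf]
  rw [← hroot]
  constructor
  · rintro h (h9 | ⟨p, hp, hpN, hp3⟩)
    · obtain ⟨x, hx⟩ := (hroot 9).1 (h.of_dvd h9)
      revert x hx
      decide
    · have := Fact.mk hp
      exact ZMod.exists_sq_add_add_one_eq_zero_iff.1 ((hroot p).1 (h.of_dvd hpN)) hp3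
  · rw [not_or, not_exists]
    rintro ⟨h9, hp⟩
    refine HasRootMod.of_forall_prime_dvd (by rintro rfl; exact h9 (dvd_zero 9)) fun p hp' hpN => ?_
    have := Fact.mk hp'
    rcases eq_or_ne p 3 with rfl | hp3
    · exact ⟨1, by rw [hf]; rfl, Or.inr h9⟩
    obtain ⟨x, hx⟩ := ZMod.exists_sq_add_add_one_eq_zero_iff.2 fun h => hp p ⟨hp', hpN, h⟩
    have h3 : (3 : ZMod p) ≠ 0 := by
      exact_mod_cast CharP.cast_ne_zero_of_ne_of_prime (ZMod p) Nat.prime_three hp3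
    refine ⟨x, by rw [hf, hx], Or.inl ?_⟩
    rw [hf']
    intro h
    -- `(2 * x + 1) ^ 2 = 4 * (x ^ 2 + x + 1) - 3`
    exact h3 (by linear_combination 4 * hx - (2 * x + 1) * h)

theorem Matrix.SpecialLinearGroup.det_fin_two_eq_one {R : Type*} [CommRing R] (g : SL(2, R)) :
    g 0 0 * g 1 1 - g 0 1 * g 1 0 = 1 := by
  rw [← Matrix.det_fin_two, g.det_coe]

theorem Matrix.SpecialLinearGroup.eq_one_or_eq_neg_one_of_offDiag_eq_zero_of_diag_eq {R : Type*} [CommRing R]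
    [IsDomain R] (g : SL(2, R)) (hc : g 1 0 = 0) (hb : g 0 1 = 0) (had : g 0 0 = g 1 1) :
    g = 1 ∨ g = -1 := by
  have hdet := g.det_fin_two_eq_one
  rw [hb, had, zero_mul, sub_zero] at hdet
  rcases mul_self_eq_one_iff.1 hdet with h | h
  · left; ext i j; fin_cases i <;> fin_cases j <;> simp [hb, hc, had, h]
  · right; ext i j; fin_cases i <;> fin_cases j <;> simp [hb, hc, had, h]

namespace ModularGroup

theorem smul_eq_self_iff (g : SL(2, ℤ)) (z : ℍ) :
    g • z = z ↔ (g 0 0 - g 1 1 : ℝ) = 2 * g 1 0 * z.re ∧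
      (g 0 1 : ℝ) = -g 1 0 * (z.re ^ 2 + z.im ^ 2) := by
  have hden : (g 1 0 * z + g 1 1 : ℂ) ≠ 0 := by
    simpa [denom_apply] using denom_ne_zero g z
  rw [UpperHalfPlane.ext_iff, coe_specialLinearGroup_apply]
  simp only [eq_intCast, Complex.ofReal_intCast]
  rw [div_eq_iff hden, Complex.ext_iff]
  simp only [Complex.add_re, Complex.add_im, Complex.mul_re, Complex.mul_im, Complex.intCast_re,
    Complex.intCast_im, coe_re, coe_im]
  constructor
  · rintro ⟨hre, him⟩
    have htr : (g 0 0 - g 1 1 : ℝ) = 2 * g 1 0 * z.re :=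
      mul_right_cancel₀ z.im_pos.ne' (by linear_combination him)
    exact ⟨htr, by linear_combination hre - z.re * htr⟩
  · rintro ⟨htr, hb⟩
    exact ⟨by linear_combination hb + z.re * htr, by linear_combination z.im * htr⟩

theorem exists_smul_eq_self_of_sq_trace_lt_four {g : SL(2, ℤ)} (ht : (g 0 0 + g 1 1) ^ 2 < 4) :
    ∃ z : ℍ, g • z = z := by
  have hdet := g.det_fin_two_eq_one
  have hc : (g 1 0 : ℝ) ≠ 0 := by
    norm_cast
    intro hc
    rw [hc] at hdet
    nlinarith [sq_nonneg (g 0 0 - g 1 1)]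
  have hdisc : (0 : ℝ) < 4 - (g 0 0 + g 1 1) ^ 2 := by
    rw [sub_pos]
    exact_mod_cast ht
  -- the root `((a - d) + i √(4 - t ^ 2)) / (2 c)` of `c z ^ 2 + (d - a) z - b`, or its conjugate
  refine ⟨⟨⟨(g 0 0 - g 1 1) / (2 * g 1 0), √(4 - (g 0 0 + g 1 1) ^ 2) / (2 * |(g 1 0 : ℝ)|)⟩,
    by simp only; positivity⟩, ?_⟩
  rw [smul_eq_self_iff]
  simp only [UpperHalfPlane.re, UpperHalfPlane.im, div_pow, mul_pow, sq_abs,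
    Real.sq_sqrt hdisc.le]
  constructor
  · field_simp
  · field_simp
    linear_combination (-4 : ℝ) * (by exact_mod_cast hdet :
      (g 0 0 * g 1 1 - g 0 1 * g 1 0 : ℝ) = 1)

theorem sq_trace_lt_four_of_smul_eq_self {g : SL(2, ℤ)} (h1 : g ≠ 1) (hm1 : g ≠ -1) {z : ℍ}
    (hz : g • z = z) : (g 0 0 + g 1 1) ^ 2 < 4 := by
  obtain ⟨htr, hb⟩ := (smul_eq_self_iff g z).1 hz
  have hdet : (g 0 0 * g 1 1 - g 0 1 * g 1 0 : ℝ) = 1 := by exact_mod_cast g.det_fin_two_eq_one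
  have hdisc : ((g 0 0 + g 1 1) ^ 2 : ℝ) = 4 - 4 * (g 1 0 * z.im) ^ 2 := by
    linear_combination 4 * hdet + (g 0 0 - g 1 1 + 2 * g 1 0 * z.re) * htr + 4 * g 1 0 * hb
  rcases eq_or_ne (g 1 0) 0 with hc | hc
  · have had : g 0 0 = g 1 1 := by
      exact_mod_cast (by simpa [hc, sub_eq_zero] using htr : (g 0 0 : ℝ) = g 1 1)
    have hb0 : g 0 1 = 0 := by exact_mod_cast (by simpa [hc] using hb : (g 0 1 : ℝ) = 0)
    exact ((g.eq_one_or_eq_neg_one_of_offDiag_eq_zero_of_diag_eq hc hb0 had).elim h1 hm1).elim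
  · have : (0 : ℝ) < (g 1 0 * z.im) ^ 2 := by
      have := z.im_pos
      positivity
    exact_mod_cast (by linarith : ((g 0 0 + g 1 1) ^ 2 : ℝ) < 4)

theorem sq_trace_lt_four_iff (g : SL(2, ℤ)) :
    (g 0 0 + g 1 1) ^ 2 < 4 ↔ g ≠ 1 ∧ g ≠ -1 ∧ ∃ z : ℍ, g • z = z :=
  ⟨fun ht => ⟨by rintro rfl; norm_num at ht, by rintro rfl; norm_num at ht,
      exists_smul_eq_self_of_sq_trace_lt_four ht⟩,
    fun ⟨h1, hm1, _, hz⟩ => sq_trace_lt_four_of_smul_eq_self h1 hm1 hz⟩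

theorem exists_mem_Gamma0_trace_eq_iff (N : ℕ) (t : ℤ) :
    (∃ γ ∈ Gamma0 N, γ 0 0 + γ 1 1 = t) ↔ ∃ a : ZMod N, a ^ 2 - t * a + 1 = 0 := by
  constructor
  · rintro ⟨γ, hγ, rfl⟩
    have hdet := congrArg (Int.cast : ℤ → ZMod N) γ.det_fin_two_eq_one
    push_cast at hdet
    exact ⟨γ 0 0, by push_cast; linear_combination -hdet - (γ 0 1 : ZMod N) * Gamma0_mem.1 hγ⟩
  · rintro ⟨a, ha⟩
    obtain ⟨a, rfl⟩ := ZMod.intCast_surjective a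
    obtain ⟨k, hk⟩ := (ZMod.intCast_zmod_eq_zero_iff_dvd (a ^ 2 - t * a + 1) N).1
      (by push_cast; exact ha)
    refine ⟨⟨!![a, -k; N, t - a], by rw [Matrix.det_fin_two_of]; linear_combination -hk⟩, ?_,
      by simp⟩
    exact Gamma0_mem.2 (by simp)

end ModularGroup

theorem exists_sq_sub_mul_add_one_eq_zero_iff {R : Type*} [CommRing R] :
    (∃ t : ℤ, t ^ 2 < 4 ∧ ∃ a : R, a ^ 2 - t * a + 1 = 0) ↔
      (∃ a : R, a ^ 2 + 1 = 0) ∨ ∃ a : R, a ^ 2 + a + 1 = 0 := by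
  constructor
  · rintro ⟨t, ht, a, ha⟩
    obtain ⟨ht₁, ht₂⟩ : -2 < t ∧ t < 2 := by constructor <;> nlinarith
    interval_cases t
    · exact Or.inr ⟨a, by push_cast at ha; linear_combination ha⟩
    · exact Or.inl ⟨a, by simpa using ha⟩
    · exact Or.inr ⟨-a, by push_cast at ha; linear_combination ha⟩
  · rintro (⟨a, ha⟩ | ⟨a, ha⟩)
    · exact ⟨0, by norm_num, a, by simpa using ha⟩
    · exact ⟨-1, by norm_num, a, by push_cast; linear_combination ha⟩

theorem gamma0_has_elliptic_point_iff_general (N : ℕ) :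
    (∃ γ : SL(2, ℤ), γ ∈ Gamma0 N ∧ γ ≠ 1 ∧ γ ≠ -1 ∧ ∃ z : UpperHalfPlane, γ • z = z) ↔
    ¬ ((4 ∣ N ∨ ∃ p : ℕ, p.Prime ∧ p ∣ N ∧ p % 4 = 3) ∧
       (9 ∣ N ∨ ∃ p : ℕ, p.Prime ∧ p ∣ N ∧ p % 3 = 2)) := by
  rw [not_and_or, ← exists_sq_add_one_eq_zero_iff, ← exists_sq_add_add_one_eq_zero_iff,
    ← exists_sq_sub_mul_add_one_eq_zero_iff]
  simp_rw [← ModularGroup.exists_mem_Gamma0_trace_eq_iff, ← ModularGroup.sq_trace_lt_four_iff]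
  constructor
  · rintro ⟨γ, hγ, ht⟩
    exact ⟨_, ht, γ, hγ, rfl⟩
  · rintro ⟨t, ht, γ, hγ, rfl⟩
    exact ⟨γ, hγ, ht⟩

/-- `Γ0(N)` has an elliptic point (a point of `ℍ` fixed by some element of `Γ0(N)`
other than `±I`) if and only if it is not the case that both: (i) `4 ∣ N` or some
prime `p ≡ 3 (mod 4)` divides `N`, and (ii) `9 ∣ N` or some prime `p ≡ 2 (mod 3)`
divides `N`. -/
theorem gamma0_has_elliptic_point_iff (N : ℕ) (hN : 0 < N) :
    (∃ γ : SL(2, ℤ), γ ∈ Gamma0 N ∧ γ ≠ 1 ∧ γ ≠ -1 ∧ ∃ z : UpperHalfPlane, γ • z = z) ↔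
    ¬ ((4 ∣ N ∨ ∃ p : ℕ, p.Prime ∧ p ∣ N ∧ p % 4 = 3) ∧
       (9 ∣ N ∨ ∃ p : ℕ, p.Prime ∧ p ∣ N ∧ p % 3 = 2)) :=
  gamma0_has_elliptic_point_iff_general N
end

section
/- Let N be a positive integer and let d(N) denote the number of positive divisors of N. The d(N) × d(N) matrix A over ℚ, with rows and columns indexed by the positive divisors of N, whose entry indexed by (d, δ) is A_{d,δ} = (N · gcd(d,δ)²) / (24 · gcd(d, N/d) · d · δ), is invertible (equivalently, has nonzero determinant). -/
/-!
Ligozat's matrix is `D₁ * G * D₂` with `D₁`, `D₂` invertible diagonal matrices and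
`G = (gcd(d, δ)²)`. Since `∑_{e ∣ n} φ(e) = n`, the gcd matrix `(gcd(d, δ))` factors as
`Z * diag(φ) * Zᵀ`, where `Z = ([e ∣ d])` is unitriangular for the usual order on divisors;
hence it is positive definite over `ℝ`, and by Schur's product theorem so is its entrywise
square `G`. In particular `det G ≠ 0`.
-/

open Matrix
open scoped ComplexOrder

namespace Nat

variable (R : Type*) (N : ℕ)

def divisorsDvdMatrix [Zero R] [One R] : Matrix N.divisors N.divisors R :=
  of fun d e => if (e : ℕ) ∣ d then 1 else 0

theorem divisorsDvdMatrix_isLowerTriangular [Zero R] [One R] :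
    (divisorsDvdMatrix R N).IsLowerTriangular := by
  intro d e hde
  exact if_neg fun h => (Nat.le_of_dvd (Nat.pos_of_mem_divisors d.2) h).not_gt hde

theorem det_divisorsDvdMatrix [CommRing R] : (divisorsDvdMatrix R N).det = 1 := by
  rw [det_of_isLowerTriangular _ (divisorsDvdMatrix_isLowerTriangular R N)]
  exact Finset.prod_eq_one fun d _ => if_pos dvd_rfl

theorem conjTranspose_divisorsDvdMatrix [NonAssocSemiring R] [StarRing R] :
    (divisorsDvdMatrix R N)ᴴ = (divisorsDvdMatrix R N)ᵀ := by
  ext d e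
  simp only [conjTranspose_apply, transpose_apply, divisorsDvdMatrix, of_apply]
  split_ifs <;> simp

variable {R}

theorem divisorsDvdMatrix_mul_diagonal_mul_transpose [CommSemiring R] (f : ℕ → R) :
    divisorsDvdMatrix R N * diagonal (fun e : N.divisors => f e) * (divisorsDvdMatrix R N)ᵀ =
      of fun d δ : N.divisors => ∑ e ∈ (gcd d δ).divisors, f e := by
  ext d δ
  have hN : N ≠ 0 := Nat.ne_zero_of_mem_divisors d.2
  have hgN : gcd d δ ∣ N := (Nat.gcd_dvd_left _ _).trans (Nat.dvd_of_mem_divisors d.2)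
  rw [mul_apply, of_apply, ← Nat.divisors_filter_dvd_of_dvd hN hgN, Finset.sum_filter,
    ← Finset.sum_coe_sort N.divisors]
  refine Finset.sum_congr rfl fun e _ => ?_
  simp only [mul_diagonal, transpose_apply, divisorsDvdMatrix, of_apply, Nat.dvd_gcd_iff]
  split_ifs <;> simp_all

theorem posDef_gcd_divisors {𝕜 : Type*} [RCLike 𝕜] :
    (of fun d δ : N.divisors => (gcd d δ : 𝕜)).PosDef := by
  have hZ : IsUnit (divisorsDvdMatrix 𝕜 N) := by
    rw [isUnit_iff_isUnit_det, det_divisorsDvdMatrix]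
    exact isUnit_one
  have hfactor := divisorsDvdMatrix_mul_diagonal_mul_transpose N fun e => (φ e : 𝕜)
  simp only [← Nat.cast_sum, Nat.sum_totient] at hfactor
  rw [← hfactor, ← conjTranspose_divisorsDvdMatrix, ← star_eq_conjTranspose,
    IsUnit.posDef_star_right_conjugate_iff hZ]
  exact PosDef.diagonal fun e => by simpa using Nat.pos_of_mem_divisors e.2

theorem posDef_gcd_sq_divisors {𝕜 : Type*} [RCLike 𝕜] :
    (of fun d δ : N.divisors => (gcd d δ : 𝕜) ^ 2).PosDef := by
  convert (posDef_gcd_divisors N (𝕜 := 𝕜)).hadamard (posDef_gcd_divisors N) using 1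
  ext d δ
  simp [sq]

theorem isUnit_gcd_sq_divisors_rat :
    IsUnit (of fun d δ : N.divisors => (gcd d δ : ℚ) ^ 2) := by
  have hreal := (posDef_gcd_sq_divisors N (𝕜 := ℝ)).isUnit
  rw [isUnit_iff_isUnit_det, isUnit_iff_ne_zero] at hreal ⊢
  have hmap : (of fun d δ : N.divisors => (gcd d δ : ℚ) ^ 2).map (Rat.cast : ℚ → ℝ) =
      of fun d δ : N.divisors => (gcd d δ : ℝ) ^ 2 := by
    ext d δ
    simp
  contrapose! hreal
  rw [← hmap, ← Rat.cast_det, hreal, Rat.cast_zero]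

end Nat

theorem ligozat_matrix_invertible_general (N : ℕ) :
    IsUnit (Matrix.of fun d δ : {m : ℕ // m ∈ N.divisors} =>
      ((N : ℚ) * (Nat.gcd d δ : ℚ) ^ 2) /
        (24 * (Nat.gcd d (N / d) : ℚ) * (d : ℚ) * (δ : ℚ))) := by
  have hpos (d : N.divisors) : (0 : ℚ) < d := by exact_mod_cast Nat.pos_of_mem_divisors d.2
  have hgcd (d : N.divisors) : (0 : ℚ) < Nat.gcd d (N / d) := by
    exact_mod_cast Nat.gcd_pos_of_pos_left _ (Nat.pos_of_mem_divisors d.2)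
  have hfactor : (Matrix.of fun d δ : {m : ℕ // m ∈ N.divisors} =>
      ((N : ℚ) * (Nat.gcd d δ : ℚ) ^ 2) / (24 * (Nat.gcd d (N / d) : ℚ) * (d : ℚ) * (δ : ℚ))) =
      diagonal (fun d : N.divisors => (N : ℚ) / (24 * Nat.gcd d (N / d) * d)) *
        of (fun d δ : N.divisors => (Nat.gcd d δ : ℚ) ^ 2) *
          diagonal (fun δ : N.divisors => (δ : ℚ)⁻¹) := by
    ext d δ
    simp only [mul_diagonal, diagonal_mul, of_apply]
    field_simp
  rw [hfactor]
  refine ((isUnit_diagonal.mpr ?_).mul (Nat.isUnit_gcd_sq_divisors_rat N)).mul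
    (isUnit_diagonal.mpr ?_)
  · exact Pi.isUnit_iff.mpr fun d => (div_ne_zero
      (Nat.cast_ne_zero.mpr (Nat.ne_zero_of_mem_divisors d.2))
      (mul_pos (mul_pos (by norm_num) (hgcd d)) (hpos d)).ne').isUnit
  · exact Pi.isUnit_iff.mpr fun δ => (inv_ne_zero (hpos δ).ne').isUnit

/-- The matrix of Ligozat's formula is invertible: for a positive integer `N`, the
square matrix over `ℚ` indexed by the positive divisors of `N`, with entry
`(N · gcd(d,δ)²) / (24 · gcd(d, N/d) · d · δ)` in position `(d, δ)`, has nonzero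
determinant (equivalently, is invertible). -/
theorem ligozat_matrix_invertible (N : ℕ) (hN : 0 < N) :
    IsUnit (Matrix.of fun d δ : {m : ℕ // m ∈ N.divisors} =>
      ((N : ℚ) * (Nat.gcd d δ : ℚ) ^ 2) /
        (24 * (Nat.gcd d (N / d) : ℚ) * (d : ℚ) * (δ : ℚ))) :=
  ligozat_matrix_invertible_general N
end

section
/- For every complex number q with |q| < 1, the infinite product ∏_{n=1}^∞ (1 − q^n) converges and equals 1 + Σ_{n=1}^∞ (−1)^n (q^{n(3n+1)/2} + q^{n(3n−1)/2}), where the series converges absolutely. -/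
/-!
Mathlib's `Pentagonal.tprod_one_sub_pow` proves the identity in any topological ring, provided the
series and products it involves converge and a certain tail tends to zero. For `‖x‖ < 1` in a
complete normed ring, every finite product `∏ (1 - x ^ (k + i + 1))` has norm at most
`exp (1 - ‖x‖)⁻¹`, uniformly in `k` and in the number of factors, so all those series are dominated
by geometric ones and the tail is `O(‖x‖ ^ k)`. Regrouping the pentagonal series of Mathlib's form
into the pairs `±(x ^ (k(3k+1)/2) + x ^ (k(3k-1)/2))` is legitimate by absolute convergence.
-/

open Finset Filter Topology

namespace Pentagonal

theorem pentagonal_natCast (k : ℕ) : pentagonal k = k * (3 * k - 1) / 2 := by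
  grind [pentagonal_def]

theorem pentagonal_neg_natCast (k : ℕ) : pentagonal (-k) = k * (3 * k + 1) / 2 := by
  grind [pentagonal_neg]

theorem le_pentagonal_natCast (k : ℕ) : k ≤ pentagonal k := by
  rw [pentagonal_natCast, Nat.le_div_iff_mul_le two_pos]
  rcases k with _ | k
  · simp
  · exact Nat.mul_le_mul_left _ (by omega)

theorem le_pentagonal_neg_natCast (k : ℕ) : k ≤ pentagonal (-k) := by
  rw [pentagonal_neg_natCast, Nat.le_div_iff_mul_le two_pos]
  rcases k with _ | k
  · simp
  · exact Nat.mul_le_mul_left _ (by omega)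

variable {R : Type*} [NormedCommRing R] [NormOneClass R] {x : R}

theorem summable_norm_pow_of_le (hx : ‖x‖ < 1) {e : ℕ → ℕ} (he : ∀ n, n ≤ e n) :
    Summable fun n ↦ ‖x ^ e n‖ :=
  (summable_geometric_of_lt_one (norm_nonneg x) hx).of_nonneg_of_le (fun _ ↦ norm_nonneg _)
    fun n ↦ (norm_pow_le x _).trans (pow_le_pow_of_le_one (norm_nonneg x) hx.le (he n))

theorem summable_norm_neg_one_pow_mul_pow_of_le (hx : ‖x‖ < 1) {e : ℕ → ℕ}
    (he : ∀ n, n ≤ e n) : Summable fun n ↦ ‖(-1 : R) ^ n * x ^ e n‖ :=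
  (summable_norm_pow_of_le hx he).of_nonneg_of_le (fun _ ↦ norm_nonneg _) fun n ↦ by
    simpa using norm_mul_le_of_le (norm_pow_le (-1 : R) n) le_rfl

theorem multipliable_one_sub_pow_add [CompleteSpace R] (hx : ‖x‖ < 1) (k : ℕ) :
    Multipliable fun n ↦ 1 - x ^ (n + k + 1) := by
  simpa [sub_eq_add_neg] using multipliable_one_add_of_summable (f := fun n ↦ -x ^ (n + k + 1))
    (by simpa using summable_norm_pow_of_le hx (e := (· + k + 1)) (by omega))

theorem norm_prod_range_one_sub_pow_le (hx : ‖x‖ < 1) (k n : ℕ) :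
    ‖∏ i ∈ range n, (1 - x ^ (k + i + 1))‖ ≤ Real.exp (1 - ‖x‖)⁻¹ := by
  have hsum : ∑ i ∈ range n, ‖-x ^ (k + i + 1)‖ ≤ (1 - ‖x‖)⁻¹ :=
    calc ∑ i ∈ range n, ‖-x ^ (k + i + 1)‖ ≤ ∑ i ∈ range n, ‖x‖ ^ i := by
          refine sum_le_sum fun i _ ↦ ?_
          rw [norm_neg]
          exact (norm_pow_le x _).trans (pow_le_pow_of_le_one (norm_nonneg x) hx.le (by omega))
      _ ≤ (1 - ‖x‖)⁻¹ := by
          simpa using geom_sum_Ico_le_of_lt_one (m := 0) (n := n) (norm_nonneg x) hx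
  calc ‖∏ i ∈ range n, (1 - x ^ (k + i + 1))‖
      ≤ ‖∏ i ∈ range n, (1 + -x ^ (k + i + 1)) - 1‖ + ‖(1 : R)‖ := by
        simpa [sub_eq_add_neg] using norm_le_norm_sub_add (∏ i ∈ range n, (1 - x ^ (k + i + 1))) 1
    _ ≤ Real.exp (∑ i ∈ range n, ‖-x ^ (k + i + 1)‖) - 1 + 1 := by
        rw [norm_one]
        gcongr
        exact norm_prod_one_add_sub_one_le _ _
    _ ≤ Real.exp (1 - ‖x‖)⁻¹ := by
        simpa using Real.exp_le_exp.mpr hsum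

theorem norm_pow_mul_prod_one_sub_pow_le (hx : ‖x‖ < 1) (k n : ℕ) :
    ‖x ^ ((k + 1) * n) * ∏ i ∈ range (n + 1), (1 - x ^ (k + i + 1))‖ ≤
      Real.exp (1 - ‖x‖)⁻¹ * (‖x‖ ^ (k + 1)) ^ n := by
  rw [mul_comm, ← pow_mul]
  exact norm_mul_le_of_le (norm_prod_range_one_sub_pow_le hx k (n + 1)) (norm_pow_le x _)

theorem summable_pow_mul_prod_one_sub_pow [CompleteSpace R] (hx : ‖x‖ < 1) (k : ℕ) :
    Summable fun n ↦ x ^ ((k + 1) * n) * ∏ i ∈ range (n + 1), (1 - x ^ (k + i + 1)) :=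
  ((summable_geometric_of_lt_one (by positivity)
    (pow_lt_one₀ (norm_nonneg x) hx k.succ_ne_zero)).mul_left _).of_norm_bounded
    (norm_pow_mul_prod_one_sub_pow_le hx k)

theorem norm_tsum_pow_mul_prod_one_sub_pow_le (hx : ‖x‖ < 1) (k : ℕ) :
    ‖∑' n, x ^ ((k + 1) * n) * ∏ i ∈ range (n + 1), (1 - x ^ (k + i + 1))‖ ≤
      Real.exp (1 - ‖x‖)⁻¹ * (1 - ‖x‖)⁻¹ := by
  have hxk : ‖x‖ ^ (k + 1) < 1 := pow_lt_one₀ (norm_nonneg x) hx k.succ_ne_zero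
  refine (tsum_of_norm_bounded ((hasSum_geometric_of_lt_one (by positivity) hxk).mul_left _)
    (norm_pow_mul_prod_one_sub_pow_le hx k)).trans ?_
  gcongr
  exact pow_le_of_le_one (norm_nonneg x) hx.le k.succ_ne_zero

theorem tendsto_neg_one_pow_mul_pow_mul_tsum (hx : ‖x‖ < 1) :
    Tendsto (fun k ↦ (-1) ^ (k + 1) * x ^ ((k + 1) * (3 * k + 4) / 2) *
      ∑' n, x ^ ((k + 1) * n) * ∏ i ∈ range (n + 1), (1 - x ^ (k + i + 1))) atTop (𝓝 0) := by
  refine squeeze_zero_norm (a := fun k ↦ ‖x‖ ^ k * (Real.exp (1 - ‖x‖)⁻¹ * (1 - ‖x‖)⁻¹))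
    (fun k ↦ ?_) ?_
  · refine norm_mul_le_of_le ?_ (norm_tsum_pow_mul_prod_one_sub_pow_le hx k)
    refine (norm_mul_le_of_le (norm_pow_le _ _) (norm_pow_le _ _)).trans ?_
    rw [norm_neg, norm_one, one_pow, one_mul]
    exact pow_le_pow_of_le_one (norm_nonneg x) hx.le
      ((Nat.le_div_iff_mul_le two_pos).mpr (by nlinarith))
  · simpa using (tendsto_pow_atTop_nhds_zero_of_lt_one (norm_nonneg x) hx).mul_const
      (Real.exp (1 - ‖x‖)⁻¹ * (1 - ‖x‖)⁻¹)

theorem summable_norm_neg_one_pow_mul_pow_pentagonal_add (hx : ‖x‖ < 1) :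
    Summable fun k : ℕ ↦ ‖(-1 : R) ^ k * (x ^ pentagonal (-k) + x ^ pentagonal k)‖ :=
  ((summable_norm_neg_one_pow_mul_pow_of_le hx le_pentagonal_neg_natCast).add
    (summable_norm_neg_one_pow_mul_pow_of_le hx le_pentagonal_natCast)).of_nonneg_of_le
    (fun _ ↦ norm_nonneg _) fun k ↦ by
      rw [mul_add]
      exact norm_add_le _ _

theorem hasSum_neg_one_pow_mul_pow_pentagonal_sub [CompleteSpace R] (hx : ‖x‖ < 1) :
    HasSum (fun k : ℕ ↦ (-1 : R) ^ k * (x ^ pentagonal (-k) - x ^ pentagonal (k + 1)))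
      (1 + ∑' n : ℕ, (-1 : R) ^ (n + 1) *
        (x ^ pentagonal (-((n + 1 : ℕ) : ℤ)) + x ^ pentagonal ((n + 1 : ℕ) : ℤ))) := by
  set u : ℕ → R := fun k ↦ (-1) ^ k * x ^ pentagonal (-k)
  set w : ℕ → R := fun k ↦ (-1) ^ k * x ^ pentagonal k
  have hu : Summable u :=
    (summable_norm_neg_one_pow_mul_pow_of_le hx le_pentagonal_neg_natCast).of_norm
  have hu₁ : Summable fun k ↦ u (k + 1) := (summable_nat_add_iff 1).mpr hu
  have hw₁ : Summable fun k ↦ w (k + 1) :=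
    (summable_nat_add_iff 1).mpr
      (summable_norm_neg_one_pow_mul_pow_of_le hx le_pentagonal_natCast).of_norm
  have hsplit : (fun k : ℕ ↦ (-1 : R) ^ k * (x ^ pentagonal (-k) - x ^ pentagonal (k + 1))) =
      fun k ↦ u k + w (k + 1) :=
    funext fun k ↦ by simp only [u, w]; push_cast; ring
  rw [hsplit]
  convert (hu.add hw₁).hasSum using 1
  rw [hu.tsum_add hw₁, hu.tsum_eq_zero_add, add_assoc, ← hu₁.tsum_add hw₁]
  congr 1
  · simp [u, pentagonal_def]
  · exact tsum_congr fun n ↦ mul_add _ _ _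

theorem tprod_one_sub_pow_eq_one_add_tsum [CompleteSpace R] (hx : ‖x‖ < 1) :
    ∏' n, (1 - x ^ (n + 1)) =
      1 + ∑' n : ℕ, (-1 : R) ^ (n + 1) *
        (x ^ pentagonal (-((n + 1 : ℕ) : ℤ)) + x ^ pentagonal ((n + 1 : ℕ) : ℤ)) := by
  have h := hasSum_neg_one_pow_mul_pow_pentagonal_sub hx
  rw [← h.tsum_eq]
  exact tprod_one_sub_pow (tendsto_pow_atTop_nhds_zero_of_norm_lt_one hx)
    (summable_pow_mul_prod_one_sub_pow hx) (multipliable_one_sub_pow_add hx) h.summable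
    (tendsto_neg_one_pow_mul_pow_mul_tsum hx)

end Pentagonal

open Pentagonal in
/-- Euler's pentagonal number theorem: for `|q| < 1`, the product `∏_{n≥1} (1 - qⁿ)`
converges and equals `1 + Σ_{n≥1} (-1)ⁿ (q^{n(3n+1)/2} + q^{n(3n-1)/2})`, with the
series converging absolutely. -/
theorem pentagonal_number_theorem (q : ℂ) (hq : ‖q‖ < 1) :
    Multipliable (fun n : ℕ => 1 - q ^ (n + 1)) ∧
    Summable (fun n : ℕ =>
      ‖(-1 : ℂ) ^ (n + 1) *
        (q ^ ((n + 1) * (3 * (n + 1) + 1) / 2) + q ^ ((n + 1) * (3 * (n + 1) - 1) / 2))‖) ∧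
    ∏' n : ℕ, (1 - q ^ (n + 1)) =
      1 + ∑' n : ℕ, (-1 : ℂ) ^ (n + 1) *
        (q ^ ((n + 1) * (3 * (n + 1) + 1) / 2) + q ^ ((n + 1) * (3 * (n + 1) - 1) / 2)) := by
  simp only [← pentagonal_neg_natCast, ← pentagonal_natCast]
  exact ⟨multipliable_one_sub_pow_add hq 0,
    (summable_nat_add_iff 1).mpr (summable_norm_neg_one_pow_mul_pow_pentagonal_add hq),
    tprod_one_sub_pow_eq_one_add_tsum hq⟩
end
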